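/- The state-space realization (A, B, C) with A = diag(ν_1,…,ν_n) − B·eₙᵀ, B = (α_1,…,α_n)ᵀ, C = (h_1,…,h_n), eₙ the all-ones vector, has transfer function C(ξI − A)⁻¹B equal to the barycentric rational function (Σ_j α_j h_j/(ξ − ν_j))/(1 + Σ_j α_j/(ξ − ν_j)), for every ξ at which ξI − A is invertible and ξ ≠ ν_j for all j. -/

import Mathlib

/-!
`ξ • 1 - A = diagonal (ξ - ν) + α 1ᵀ` is a rank-one update of an invertible diagonal matrix, so by
Sherman–Morrison `(ξ • 1 - A)⁻¹ α = y / (1 + ∑ y)` with `y j = α j / (ξ - ν j)`, the solution of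
`diagonal (ξ - ν) y = α`; dotting with `h` gives the barycentric quotient.
-/

open Matrix

section ShermanMorrison

variable {ι K : Type*} [Fintype ι] [Field K]

theorem Matrix.add_vecMulVec_mulVec_of_mulVec_eq {D : Matrix ι ι K} {u v y : ι → K}
    (hy : D *ᵥ y = u) : (D + vecMulVec u v) *ᵥ y = (1 + v ⬝ᵥ y) • u := by
  rw [add_mulVec, hy, vecMulVec_mulVec, op_smul_eq_smul, add_smul, one_smul]

theorem Matrix.inv_add_vecMulVec_mulVec_of_mulVec_eq [DecidableEq ι] {D : Matrix ι ι K}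
    {u v y : ι → K} (hy : D *ᵥ y = u) (hM : IsUnit (D + vecMulVec u v).det) :
    (D + vecMulVec u v)⁻¹ *ᵥ u = (1 + v ⬝ᵥ y)⁻¹ • y := by
  have hMy := add_vecMulVec_mulVec_of_mulVec_eq (v := v) hy
  have hy_eq : y = (1 + v ⬝ᵥ y) • ((D + vecMulVec u v)⁻¹ *ᵥ u) := by
    rw [← mulVec_smul, ← hMy, mulVec_mulVec, nonsing_inv_mul _ hM, one_mulVec]
  have hc : 1 + v ⬝ᵥ y ≠ 0 := by
    intro hc
    rw [hc, zero_smul] at hy_eq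
    simp [hy_eq] at hc
  rw [eq_inv_smul_iff₀ hc, ← hy_eq]

end ShermanMorrison

theorem aaa_realization_transfer_function_general (n : ℕ)
    (ν α h : Fin n → ℂ)
    (A : Matrix (Fin n) (Fin n) ℂ)
    (hA : A = Matrix.diagonal ν - Matrix.vecMulVec α (fun _ => 1))
    (ξ : ℂ) (hξ : ∀ j, ξ ≠ ν j)
    (hinv : IsUnit (ξ • (1 : Matrix (Fin n) (Fin n) ℂ) - A).det) :
    h ⬝ᵥ (ξ • (1 : Matrix (Fin n) (Fin n) ℂ) - A)⁻¹.mulVec α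
      = (∑ j, α j * h j / (ξ - ν j)) / (1 + ∑ j, α j / (ξ - ν j)) := by
  have hsplit : ξ • (1 : Matrix (Fin n) (Fin n) ℂ) - A
      = diagonal (fun j => ξ - ν j) + vecMulVec α 1 := by
    rw [hA, smul_one_eq_diagonal, sub_sub_eq_add_sub, add_sub_right_comm, diagonal_sub]
    rfl
  set y : Fin n → ℂ := fun j => α j / (ξ - ν j)
  have hy : diagonal (fun j => ξ - ν j) *ᵥ y = α := by
    ext j
    rw [mulVec_diagonal, mul_div_cancel₀ _ (sub_ne_zero.mpr (hξ j))]
  rw [hsplit] at hinv ⊢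
  rw [inv_add_vecMulVec_mulVec_of_mulVec_eq hy hinv, dotProduct_smul, one_dotProduct,
    smul_eq_mul, inv_mul_eq_div, dotProduct]
  congr 1
  exact Finset.sum_congr rfl fun j _ => by ring

theorem aaa_realization_transfer_function (n : ℕ) (hn : 1 ≤ n)
    (ν α h : Fin n → ℂ) (hν : Function.Injective ν)
    (A : Matrix (Fin n) (Fin n) ℂ)
    (hA : A = Matrix.diagonal ν - Matrix.vecMulVec α (fun _ => 1))
    (ξ : ℂ) (hξ : ∀ j, ξ ≠ ν j)
    (hinv : IsUnit (ξ • (1 : Matrix (Fin n) (Fin n) ℂ) - A).det) :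
    h ⬝ᵥ (ξ • (1 : Matrix (Fin n) (Fin n) ℂ) - A)⁻¹.mulVec α
      = (∑ j, α j * h j / (ξ - ν j)) / (1 + ∑ j, α j / (ξ - ν j)) :=
  aaa_realization_transfer_function_general n ν α h A hA ξ hξ hinv
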